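/- If g is an even positive integer, then there are exactly 2 gapsets of genus g all of whose Kunz coordinates lie in [g/2, g+1]: the one with Kunz coordinates (g/2, g/2) (multiplicity 3) and the one with Kunz coordinates (g) (multiplicity 2). -/

import Mathlib

def IsGapset (G : Finset ℕ) : Prop :=
  0 ∉ G ∧ ∀ z ∈ G, ∀ x y : ℕ, 0 < x → 0 < y → x + y = z → x ∈ G ∨ y ∈ G

def IsNumSgp (S : Set ℕ) : Prop :=
  0 ∈ S ∧ (∀ a ∈ S, ∀ b ∈ S, a + b ∈ S) ∧ Sᶜ.Finite

noncomputable def mult (G : Finset ℕ) : ℕ := sInf {s : ℕ | 0 < s ∧ s ∉ G}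

noncomputable def kunz (G : Finset ℕ) (i : ℕ) : ℕ := (G.filter (fun z => z % mult G = i)).card

noncomputable def gapConductor (G : Finset ℕ) : ℕ := sInf {s : ℕ | 0 < s ∧ ∀ n : ℕ, s + n ∉ G}

noncomputable def gapDepth (G : Finset ℕ) : ℕ := (gapConductor G + mult G - 1) / mult G

def KunzIneq (m : ℕ) (k : ℕ → ℕ) : Prop :=
  (∀ i j : ℕ, 1 ≤ i → i ≤ j → j ≤ m - 1 → i + j < m → k (i + j) ≤ k i + k j) ∧
  (∀ i j : ℕ, 1 ≤ i → i ≤ j → j ≤ m - 1 → m < i + j → k (i + j - m) ≤ k i + k j + 1)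

/-!
Every gapset `G` of multiplicity `m` is determined by its Kunz coordinates: `z ∈ G` iff `z` is not
a multiple of `m` and `z / m < k_{z % m}`, and the genus is `k_1 + ⋯ + k_{m-1}`. If every
coordinate is at least `g / 2`, then `(m - 1) * (g / 2) ≤ g`, so `m ≤ 3`: for `m = 2` the single
coordinate is `g`, and for `m = 3` the two coordinates sum to `g`, forcing both to equal `g / 2`.
-/

open Finset

lemma exists_pos_notMem (G : Finset ℕ) : ∃ s, 0 < s ∧ s ∉ G := by
  obtain ⟨n, hn⟩ := G.exists_nat_subset_range
  exact ⟨n + 1, n.succ_pos, fun h => by simpa using hn h⟩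

lemma mult_pos (G : Finset ℕ) : 0 < mult G :=
  (Nat.sInf_mem (exists_pos_notMem G)).1

lemma mult_notMem (G : Finset ℕ) : mult G ∉ G :=
  (Nat.sInf_mem (exists_pos_notMem G)).2

lemma mult_eq_of_forall_mem {G : Finset ℕ} {m : ℕ} (hm : 0 < m) (hmG : m ∉ G)
    (h : ∀ s, 0 < s → s < m → s ∈ G) : mult G = m :=
  IsLeast.csInf_eq ⟨⟨hm, hmG⟩, fun s ⟨hs, hsG⟩ => not_lt.1 fun hlt => hsG (h s hs hlt)⟩

namespace IsGapset

variable {G : Finset ℕ}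

lemma sub_mult_mem (hG : IsGapset G) {z : ℕ} (hz : z ∈ G) (h : mult G < z) :
    z - mult G ∈ G :=
  (hG.2 z hz _ _ (mult_pos G) (by omega) (by omega)).resolve_left (mult_notMem G)

lemma mult_mul_notMem (hG : IsGapset G) (t : ℕ) : mult G * t ∉ G := by
  induction t with
  | zero => simpa using hG.1
  | succ t ih =>
    intro h
    rcases Nat.eq_zero_or_pos t with rfl | ht
    · exact mult_notMem G (by simpa using h)
    · have hpos : 0 < mult G * t := Nat.mul_pos (mult_pos G) ht
      rcases hG.2 _ h _ _ (mult_pos G) hpos (by ring) with h' | h'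
      exacts [mult_notMem G h', ih h']

lemma add_mult_mul_mem_of_le (hG : IsGapset G) {i : ℕ} (hi : 0 < i) {s t : ℕ} (hst : s ≤ t)
    (ht : i + mult G * t ∈ G) : i + mult G * s ∈ G := by
  induction t, hst using Nat.le_induction with
  | base => exact ht
  | succ t _ ih =>
    refine ih ?_
    have h := hG.sub_mult_mem ht (by nlinarith [mult_pos G])
    rwa [mul_add_one, ← add_assoc, Nat.add_sub_cancel] at h

lemma mem_add_mult_mul_iff_lt_kunz (hG : IsGapset G) {i : ℕ} (hi : 0 < i) (him : i < mult G)
    (t : ℕ) : i + mult G * t ∈ G ↔ t < kunz G i := by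
  set m := mult G
  have hex : ∃ t, i + m * t ∉ G := by
    obtain ⟨n, hn⟩ := G.exists_nat_subset_range
    refine ⟨n, fun h => notMem_range_self (?_ : n ∈ range n)⟩
    have hlt := hn h
    simp only [mem_range] at hlt ⊢
    nlinarith [mult_pos G]
  -- `G` is closed under `· - m`, so it meets the column `i + m * t` in an initial segment
  have hmem : ∀ t, i + m * t ∈ G ↔ t < Nat.find hex := fun t =>
    ⟨fun h => not_le.1 fun hle => Nat.find_spec hex (hG.add_mult_mul_mem_of_le hi hle h),
      fun h => not_not.1 (Nat.find_min hex h)⟩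
  have hfiber : G.filter (fun z => z % m = i) = (range (Nat.find hex)).image (i + m * ·) := by
    ext z
    simp only [mem_filter, mem_image, mem_range]
    constructor
    · rintro ⟨hz, rfl⟩
      refine ⟨z / m, (hmem _).1 ?_, Nat.mod_add_div z m⟩
      rwa [Nat.mod_add_div]
    · rintro ⟨t, ht, rfl⟩
      refine ⟨(hmem t).2 ht, ?_⟩
      rw [Nat.add_mul_mod_self_left, Nat.mod_eq_of_lt him]
  have hkunz : kunz G i = Nat.find hex := by
    rw [kunz, hfiber, card_image_of_injective _ fun a b hab => ?_, card_range]
    exact Nat.eq_of_mul_eq_mul_left (mult_pos G) (Nat.add_left_cancel hab)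
  rw [hkunz, hmem]

lemma mem_iff (hG : IsGapset G) {z : ℕ} :
    z ∈ G ↔ z % mult G ≠ 0 ∧ z / mult G < kunz G (z % mult G) := by
  by_cases hz : z % mult G = 0
  · have hzm : z = mult G * (z / mult G) := by simpa [hz] using (Nat.mod_add_div z (mult G)).symm
    simpa [hz, ← hzm] using hG.mult_mul_notMem (z / mult G)
  · rw [← hG.mem_add_mult_mul_iff_lt_kunz (Nat.pos_of_ne_zero hz) (Nat.mod_lt z (mult_pos G)),
      Nat.mod_add_div]
    exact (and_iff_right hz).symm

lemma ext_of_kunz {H : Finset ℕ} (hG : IsGapset G) (hH : IsGapset H) (hm : mult G = mult H)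
    (hk : ∀ i, 0 < i → i < mult G → kunz G i = kunz H i) : G = H := by
  ext z
  rw [hG.mem_iff, hH.mem_iff, ← hm]
  exact and_congr_right fun hz => by
    rw [hk _ (Nat.pos_of_ne_zero hz) (Nat.mod_lt z (mult_pos G))]

lemma card_eq_sum_kunz (hG : IsGapset G) : G.card = ∑ i ∈ Ico 1 (mult G), kunz G i := by
  have hkunz_zero : kunz G 0 = 0 :=
    card_eq_zero.2 <| filter_eq_empty_iff.2 fun z hz hz0 => (hG.mem_iff.1 hz).1 hz0
  rw [← zero_add (∑ i ∈ Ico 1 (mult G), kunz G i), ← hkunz_zero,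
    ← sum_range_eq_add_Ico _ (mult_pos G)]
  exact card_eq_sum_card_fiberwise fun z _ => mem_range.2 (Nat.mod_lt z (mult_pos G))

end IsGapset

def blockGapset (m k : ℕ) : Finset ℕ := (range (m * k)).filter (fun z => z % m ≠ 0)

lemma mem_blockGapset {m k z : ℕ} : z ∈ blockGapset m k ↔ z < m * k ∧ z % m ≠ 0 := by
  simp [blockGapset]

lemma isGapset_blockGapset (m k : ℕ) : IsGapset (blockGapset m k) := by
  refine ⟨by simp [mem_blockGapset], fun z hz x y _ _ hxy => ?_⟩
  simp only [mem_blockGapset] at hz ⊢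
  have hres : x % m ≠ 0 ∨ y % m ≠ 0 := by
    by_contra! h
    exact hz.2 (by rw [← hxy, Nat.add_mod, h.1, h.2, Nat.zero_mod])
  rcases hres with h | h
  exacts [Or.inl ⟨by omega, h⟩, Or.inr ⟨by omega, h⟩]

section

variable {m k : ℕ}

lemma mult_blockGapset (hm : 0 < m) (hk : 0 < k) : mult (blockGapset m k) = m :=
  mult_eq_of_forall_mem hm (by simp [mem_blockGapset]) fun s hs hsm =>
    mem_blockGapset.2 ⟨by nlinarith, by rw [Nat.mod_eq_of_lt hsm]; omega⟩

lemma kunz_blockGapset (hm : 0 < m) (hk : 0 < k) {i : ℕ} (hi : 0 < i) (him : i < m) :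
    kunz (blockGapset m k) i = k := by
  have him' : i < mult (blockGapset m k) := by rwa [mult_blockGapset hm hk]
  refine eq_of_forall_lt_iff fun t => ?_
  rw [← (isGapset_blockGapset m k).mem_add_mult_mul_iff_lt_kunz hi him', mult_blockGapset hm hk,
    mem_blockGapset, Nat.add_mul_mod_self_left, Nat.mod_eq_of_lt him, mul_comm m k,
    ← Nat.div_lt_iff_lt_mul hm, Nat.add_mul_div_left _ _ hm, Nat.div_eq_of_lt him, zero_add]
  exact and_iff_left hi.ne'

lemma card_blockGapset (hm : 0 < m) (hk : 0 < k) : (blockGapset m k).card = (m - 1) * k := by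
  rw [(isGapset_blockGapset m k).card_eq_sum_kunz, mult_blockGapset hm hk,
    sum_congr rfl fun i hi => kunz_blockGapset hm hk (mem_Ico.1 hi).1 (mem_Ico.1 hi).2,
    sum_const, Nat.card_Ico, smul_eq_mul]

lemma IsGapset.eq_blockGapset {G : Finset ℕ} (hG : IsGapset G) (hk : 0 < k)
    (h : ∀ i, 0 < i → i < mult G → kunz G i = k) : G = blockGapset (mult G) k :=
  hG.ext_of_kunz (isGapset_blockGapset _ k) (mult_blockGapset (mult_pos G) hk).symm fun i hi him =>
    (h i hi him).trans (kunz_blockGapset (mult_pos G) hk hi him).symm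

end

lemma IsGapset.mult_sub_one_mul_le_card {G : Finset ℕ} (hG : IsGapset G) {k : ℕ}
    (hk : ∀ i, 0 < i → i < mult G → k ≤ kunz G i) : (mult G - 1) * k ≤ G.card := by
  have h := card_nsmul_le_sum _ _ _ fun i hi => hk i (mem_Ico.1 hi).1 (mem_Ico.1 hi).2
  rwa [Nat.card_Ico, smul_eq_mul, ← hG.card_eq_sum_kunz] at h

lemma IsGapset.eq_blockGapset_of_half_le_kunz {G : Finset ℕ} (hG : IsGapset G) {g : ℕ}
    (hg : 0 < g) (he : Even g) (hcard : G.card = g)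
    (hk : ∀ i, 0 < i → i < mult G → g / 2 ≤ kunz G i) :
    G = blockGapset 2 g ∨ G = blockGapset 3 (g / 2) := by
  have hbound := hG.mult_sub_one_mul_le_card hk
  have hsum := hG.card_eq_sum_kunz
  obtain ⟨r, rfl⟩ := he
  have hr : (r + r) / 2 = r := by omega
  rw [hr, hcard] at hbound
  rw [hr] at hk ⊢
  rw [hcard] at hsum
  have h2 : 2 ≤ mult G := by
    by_contra! h
    have h1 : mult G = 1 := by have := mult_pos G; omega
    rw [h1, Ico_self, sum_empty] at hsum
    omega
  have h3 : mult G - 1 ≤ 2 :=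
    Nat.le_of_mul_le_mul_right (by omega : (mult G - 1) * r ≤ 2 * r) (by omega)
  obtain hm | hm : mult G = 2 ∨ mult G = 3 := by omega
  · left
    simp only [hm, sum_Ico_eq_sum_range, sum_range_succ, sum_range_zero, zero_add,
      Nat.reduceAdd] at hsum
    rw [hG.eq_blockGapset (k := r + r) (by omega) fun i hi him => ?_, hm]
    obtain rfl : i = 1 := by omega
    exact hsum.symm
  · right
    have hk1 := hk 1 one_pos (by omega)
    have hk2 := hk 2 two_pos (by omega)
    simp only [hm, sum_Ico_eq_sum_range, sum_range_succ, sum_range_zero, zero_add,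
      Nat.reduceAdd] at hsum
    rw [hG.eq_blockGapset (k := r) (by omega) fun i hi him => ?_, hm]
    obtain rfl | rfl : i = 1 ∨ i = 2 := by omega
    all_goals omega

lemma image_two_mul_add_one_range (k : ℕ) :
    (range k).image (fun j => 2 * j + 1) = blockGapset 2 k := by
  ext z
  simp only [mem_image, mem_range, mem_blockGapset]
  constructor
  · rintro ⟨j, hj, rfl⟩
    omega
  · exact fun hz => ⟨z / 2, by omega, by omega⟩

lemma image_three_mul_add_one_range_union (k : ℕ) :
    (range k).image (fun j => 3 * j + 1) ∪ (range k).image (fun j => 3 * j + 2) =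
      blockGapset 3 k := by
  ext z
  simp only [mem_union, mem_image, mem_range, mem_blockGapset]
  constructor
  · rintro (⟨j, hj, rfl⟩ | ⟨j, hj, rfl⟩) <;> omega
  · intro hz
    rcases (by omega : z % 3 = 1 ∨ z % 3 = 2) with h | h
    exacts [Or.inl ⟨z / 3, by omega, by omega⟩, Or.inr ⟨z / 3, by omega, by omega⟩]

theorem gapsets_level_half_genus (g : ℕ) (hg : 0 < g) (he : Even g) :
    {G : Finset ℕ | IsGapset G ∧ G.card = g ∧
        ∀ i : ℕ, 1 ≤ i → i < mult G → kunz G i ∈ Set.Icc (g / 2) (g + 1)} =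
      {(Finset.range g).image (fun j => 2 * j + 1),
        ((Finset.range (g / 2)).image (fun j => 3 * j + 1)) ∪
          ((Finset.range (g / 2)).image (fun j => 3 * j + 2))} ∧
      (Finset.range g).image (fun j => 2 * j + 1) ≠
        ((Finset.range (g / 2)).image (fun j => 3 * j + 1)) ∪
          ((Finset.range (g / 2)).image (fun j => 3 * j + 2)) ∧
      mult ((Finset.range g).image (fun j => 2 * j + 1)) = 2 ∧
      kunz ((Finset.range g).image (fun j => 2 * j + 1)) 1 = g ∧
      mult (((Finset.range (g / 2)).image (fun j => 3 * j + 1)) ∪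
        ((Finset.range (g / 2)).image (fun j => 3 * j + 2))) = 3 ∧
      kunz (((Finset.range (g / 2)).image (fun j => 3 * j + 1)) ∪
        ((Finset.range (g / 2)).image (fun j => 3 * j + 2))) 1 = g / 2 ∧
      kunz (((Finset.range (g / 2)).image (fun j => 3 * j + 1)) ∪
        ((Finset.range (g / 2)).image (fun j => 3 * j + 2))) 2 = g / 2 := by
  have hr : 0 < g / 2 := by obtain ⟨r, rfl⟩ := he; omega
  rw [image_two_mul_add_one_range, image_three_mul_add_one_range_union]
  refine ⟨?_, fun h => by simpa [mult_blockGapset, hg, hr] using congrArg mult h,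
    mult_blockGapset two_pos hg, kunz_blockGapset two_pos hg one_pos one_lt_two,
    mult_blockGapset three_pos hr, kunz_blockGapset three_pos hr one_pos (by norm_num),
    kunz_blockGapset three_pos hr two_pos (by norm_num)⟩
  ext G
  simp only [Set.mem_ofPred_eq, Set.mem_insert_iff, Set.mem_singleton_iff, Set.mem_Icc]
  constructor
  · rintro ⟨hG, hcard, hk⟩
    exact hG.eq_blockGapset_of_half_le_kunz hg he hcard fun i hi him => (hk i hi him).1
  · rintro (rfl | rfl)
    · refine ⟨isGapset_blockGapset 2 g, by simp [card_blockGapset, hg], fun i hi him => ?_⟩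
      rw [mult_blockGapset two_pos hg] at him
      rw [kunz_blockGapset two_pos hg hi him]
      omega
    · refine ⟨isGapset_blockGapset 3 (g / 2), ?_, fun i hi him => ?_⟩
      · rw [card_blockGapset three_pos hr]
        obtain ⟨r, rfl⟩ := he
        omega
      · rw [mult_blockGapset three_pos hr] at him
        rw [kunz_blockGapset three_pos hr hi him]
        omega
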